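/- For every integer k ≥ 6, there exists a coalition partition Ψ of the path P_k with four parts such that the coalition graph CG(P_k, Ψ) is isomorphic to the star K_{1,3}. In particular, one may take Ψ = {A, B, C, D} where A = {s_1,...,s_{k−4}} ∪ {s_k}, B = {s_{k−3}}, C = {s_{k−2}}, D = {s_{k−1}} for the path s_1 s_2 ... s_k. -/

import Mathlib

open SimpleGraph

attribute [local instance] Classical.propDecidable

def Dominates {V : Type*} (G : SimpleGraph V) (S : Set V) : Prop :=
  ∀ v, v ∉ S → ∃ u ∈ S, G.Adj u v

def Coalition {V : Type*} (G : SimpleGraph V) (A B : Set V) : Prop :=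
  Disjoint A B ∧ ¬ Dominates G A ∧ ¬ Dominates G B ∧ Dominates G (A ∪ B)

def IsCoalitionPartition {V : Type*} (G : SimpleGraph V) (P : Finset (Set V)) : Prop :=
  (∀ A ∈ P, A.Nonempty) ∧
  (∀ A ∈ P, ∀ B ∈ P, A ≠ B → Disjoint A B) ∧
  (∀ v : V, ∃ A ∈ P, v ∈ A) ∧
  (∀ A ∈ P, (Dominates G A ∧ ∃ v, A = {v}) ∨
    (¬ Dominates G A ∧ ∃ B ∈ P, B ≠ A ∧ Coalition G A B))

noncomputable def coalitionNumber {V : Type*} (G : SimpleGraph V) : ℕ :=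
  sSup {n | ∃ P : Finset (Set V), IsCoalitionPartition G P ∧ P.card = n}

def coalitionGraph {V : Type*} (G : SimpleGraph V) (P : Finset (Set V)) :
    SimpleGraph {A : Set V // A ∈ P} where
  Adj A B := Coalition G A.1 B.1
  symm := by
    constructor
    rintro A B ⟨d, na, nb, u⟩
    exact ⟨d.symm, nb, na, by rwa [Set.union_comm]⟩
  loopless := by
    constructor
    rintro ⟨A, hA⟩ ⟨d, na, nb, u⟩
    rw [Set.union_self] at u
    exact na u

/-!
The centre `A = {s_1, …, s_{k-4}, s_k}` does not dominate `P_k`, since it misses `s_{k-2}`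
together with both its neighbours; adding any one of the leaves `s_{k-3}, s_{k-2}, s_{k-1}` repairs
this. A union of at most two leaves lies in `{s_3, …}` and so never dominates `s_1`. Hence `A`
forms a coalition with each leaf and no two leaves do: the coalition graph is the star with
centre `A`.
-/

open Finset Function

section CoalitionGraph

variable {V : Type*} {G : SimpleGraph V}

theorem Coalition.symm {A B : Set V} (h : Coalition G A B) : Coalition G B A :=
  ⟨h.1.symm, h.2.2.1, h.2.1, Set.union_comm A B ▸ h.2.2.2⟩

theorem not_coalition_self (A : Set V) : ¬ Coalition G A A :=
  fun h => h.2.1 (Set.union_self A ▸ h.2.2.2)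

theorem isCoalitionPartition_of_forall_exists_coalition {P : Finset (Set V)}
    (hne : ∀ A ∈ P, A.Nonempty) (hdisj : ∀ A ∈ P, ∀ B ∈ P, A ≠ B → Disjoint A B)
    (hcover : ∀ v, ∃ A ∈ P, v ∈ A) (hpartner : ∀ A ∈ P, ∃ B ∈ P, Coalition G A B) :
    IsCoalitionPartition G P := by
  refine ⟨hne, hdisj, hcover, fun A hA => Or.inr ?_⟩
  obtain ⟨B, hB, hAB⟩ := hpartner A hA
  exact ⟨hAB.2.1, B, hB, fun h => not_coalition_self A (h ▸ hAB), hAB⟩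

theorem coalitionGraph_iso_of_injective {ι : Type*} {H : SimpleGraph ι} {P : Finset (Set V)}
    (f : ι → Set V) (hf : Injective f) (hP : ∀ A, A ∈ P ↔ A ∈ Set.range f)
    (hadj : ∀ i j, Coalition G (f i) (f j) ↔ H.Adj i j) :
    Nonempty (coalitionGraph G P ≃g H) := by
  let e : ι ≃ {A // A ∈ P} := Equiv.ofBijective (fun i => ⟨f i, (hP _).2 ⟨i, rfl⟩⟩)
    ⟨fun i j h => hf (congrArg Subtype.val h),
      fun ⟨A, hA⟩ => ((hP A).1 hA).imp fun _ hi => Subtype.ext hi⟩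
  exact ⟨(⟨e, fun {i j} => hadj i j⟩ : H ≃g coalitionGraph G P).symm⟩

variable {n : ℕ} (A : Set V) (g : Fin n → Set V)

theorem coalitionGraph_iso_completeBipartiteGraph (hg : Injective g)
    (hAg : ∀ j, Coalition G A (g j)) (hgg : ∀ j j', ¬ Coalition G (g j) (g j')) :
    Nonempty (coalitionGraph G (insert A (univ.image g)) ≃g
      completeBipartiteGraph (Fin 1) (Fin n)) := by
  refine coalitionGraph_iso_of_injective (Sum.elim (fun _ => A) g)
    ((injective_of_subsingleton _).sumElim hg
      fun _ j h => not_coalition_self (G := G) A (by simpa [h] using hAg j)) (fun X => ?_) ?_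
  · simp [eq_comm]
  · rintro (i | j) (i' | j')
    · simpa using not_coalition_self A
    · simpa using hAg j'
    · simpa using (hAg j).symm
    · simpa using hgg j j'

theorem isCoalitionPartition_star [NeZero n] (hA : A.Nonempty) (hg : ∀ j, (g j).Nonempty)
    (hgg : Pairwise (Disjoint on g)) (hcover : ∀ v, v ∈ A ∨ ∃ j, v ∈ g j)
    (hAg : ∀ j, Coalition G A (g j)) :
    IsCoalitionPartition G (insert A (univ.image g)) := by
  refine isCoalitionPartition_of_forall_exists_coalition ?_ ?_ ?_ ?_
  · simpa using ⟨hA, hg⟩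
  · simp only [mem_insert, mem_image, mem_univ, true_and]
    rintro _ (rfl | ⟨j, rfl⟩) _ (rfl | ⟨j', rfl⟩) hne
    · exact absurd rfl hne
    · exact (hAg j').1
    · exact (hAg j).1.symm
    · exact hgg fun h => hne (congrArg g h)
  · intro v
    rcases hcover v with hv | ⟨j, hv⟩
    · exact ⟨A, mem_insert_self _ _, hv⟩
    · exact ⟨g j, by simp, hv⟩
  · simp only [mem_insert, mem_image, mem_univ, true_and]
    rintro _ (rfl | ⟨j, rfl⟩)
    · exact ⟨g 0, Or.inr ⟨0, rfl⟩, hAg 0⟩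
    · exact ⟨A, Or.inl rfl, (hAg j).symm⟩

end CoalitionGraph

section PathGraph

variable {k : ℕ}

def pathStarCenter (k : ℕ) : Set (Fin k) := {i | i.val ≤ k - 5 ∨ i.val = k - 1}

def pathStarLeaf (k : ℕ) (j : Fin 3) : Set (Fin k) := {i | i.val = k - 4 + j}

theorem not_dominates_pathGraph_of_two_le (hk : 0 < k) {S : Set (Fin k)}
    (hS : ∀ i ∈ S, 2 ≤ i.val) : ¬ Dominates (pathGraph k) S := by
  intro h
  obtain ⟨u, hu, hadj⟩ := h ⟨0, hk⟩ fun h0 => by simpa using hS _ h0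
  have := hS u hu
  rw [pathGraph_adj] at hadj
  simp only at hadj
  omega

theorem not_dominates_pathStarCenter (hk : 5 ≤ k) :
    ¬ Dominates (pathGraph k) (pathStarCenter k) := by
  intro h
  obtain ⟨u, hu, hadj⟩ :=
    h ⟨k - 3, by omega⟩ (by simp only [pathStarCenter, Set.mem_ofPred_eq]; omega)
  rw [pathGraph_adj] at hadj
  simp only [pathStarCenter, Set.mem_ofPred_eq] at hu hadj
  omega

theorem dominates_pathStarCenter_union_leaf (hk : 5 ≤ k) (j : Fin 3) :
    Dominates (pathGraph k) (pathStarCenter k ∪ pathStarLeaf k j) := by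
  intro v hv
  simp only [pathStarCenter, pathStarLeaf, Set.mem_union, Set.mem_ofPred_eq, not_or] at hv
  have := v.isLt
  have := j.isLt
  -- `v` is one of `k - 4, k - 3, k - 2` other than `k - 4 + j`
  obtain ⟨u, hu⟩ : ∃ u, u < k ∧ (u ≤ k - 5 ∨ u = k - 1 ∨ u = k - 4 + j) ∧
      (u + 1 = v ∨ v + 1 = u) := by
    by_cases h4 : v.val = k - 4
    · exact ⟨k - 5, by omega⟩
    by_cases h2 : v.val = k - 2
    · exact ⟨k - 1, by omega⟩
    by_cases hj : j.val = 0
    · exact ⟨k - 4, by omega⟩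
    · exact ⟨k - 2, by omega⟩
  refine ⟨⟨u, hu.1⟩, ?_, pathGraph_adj.2 hu.2.2⟩
  simpa only [pathStarCenter, pathStarLeaf, Set.mem_union, Set.mem_ofPred_eq, or_assoc] using hu.2.1

theorem coalition_pathStarCenter_leaf (hk : 6 ≤ k) (j : Fin 3) :
    Coalition (pathGraph k) (pathStarCenter k) (pathStarLeaf k j) := by
  refine ⟨Set.disjoint_left.2 fun i hi hij => ?_, not_dominates_pathStarCenter (by omega),
    not_dominates_pathGraph_of_two_le (by omega) fun i hi => ?_,
    dominates_pathStarCenter_union_leaf (by omega) j⟩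
  all_goals simp only [pathStarCenter, pathStarLeaf, Set.mem_ofPred_eq] at *; omega

theorem not_coalition_pathStarLeaf (hk : 6 ≤ k) (j j' : Fin 3) :
    ¬ Coalition (pathGraph k) (pathStarLeaf k j) (pathStarLeaf k j') := fun h =>
  not_dominates_pathGraph_of_two_le (by omega)
    (by simp only [pathStarLeaf, Set.mem_union, Set.mem_ofPred_eq]; omega) h.2.2.2

theorem pathStarLeaf_injective (hk : 4 ≤ k) : Injective (pathStarLeaf k) := by
  intro j j' h
  have := congrArg ((⟨k - 4 + j, by omega⟩ : Fin k) ∈ ·) h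
  simp only [pathStarLeaf, Set.mem_ofPred_eq, eq_iff_iff, true_iff] at this
  exact Fin.ext (by omega)

theorem image_pathStarLeaf (hk : 4 ≤ k) : univ.image (pathStarLeaf k) =
    {{i | i.val = k - 4}, {i | i.val = k - 3}, {i | i.val = k - 2}} := by
  have h₁ : k - 4 + 1 = k - 3 := by omega
  have h₂ : k - 4 + 2 = k - 2 := by omega
  ext X
  simp [pathStarLeaf, Fin.exists_fin_succ, h₁, h₂, eq_comm]

theorem isCoalitionPartition_pathGraph_star (hk : 6 ≤ k) :
    IsCoalitionPartition (pathGraph k)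
      (insert (pathStarCenter k) (univ.image (pathStarLeaf k))) := by
  refine isCoalitionPartition_star _ _ ⟨⟨0, by omega⟩, Or.inl (Nat.zero_le _)⟩
    (fun j => ⟨⟨k - 4 + j, by omega⟩, rfl⟩) ?_ ?_ (coalition_pathStarCenter_leaf hk)
  · refine fun j j' hne => Set.disjoint_left.2 fun i hi hi' => hne (Fin.ext ?_)
    simp only [pathStarLeaf, Set.mem_ofPred_eq] at hi hi'
    omega
  · intro v
    by_cases hv : v.val ≤ k - 5 ∨ v.val = k - 1
    · exact Or.inl hv
    · refine Or.inr ⟨⟨v - (k - 4), by omega⟩, ?_⟩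
      simp only [pathStarLeaf, Set.mem_ofPred_eq]
      omega

theorem coalitionGraph_pathGraph_star (hk : 6 ≤ k) :
    Nonempty (coalitionGraph (pathGraph k) (insert (pathStarCenter k) (univ.image (pathStarLeaf k)))
      ≃g completeBipartiteGraph (Fin 1) (Fin 3)) :=
  coalitionGraph_iso_completeBipartiteGraph _ _ (pathStarLeaf_injective (by omega))
    (coalition_pathStarCenter_leaf hk) (not_coalition_pathStarLeaf hk)

end PathGraph

theorem stmt15 (k : ℕ) (hk : 6 ≤ k) :
    (∃ P : Finset (Set (Fin k)),
      IsCoalitionPartition (SimpleGraph.pathGraph k) P ∧ P.card = 4 ∧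
      Nonempty ((coalitionGraph (SimpleGraph.pathGraph k) P) ≃g
        completeBipartiteGraph (Fin 1) (Fin 3))) ∧
    -- in particular, the explicit partition
    -- `A = {s_1,…,s_{k-4}} ∪ {s_k}, B = {s_{k-3}}, C = {s_{k-2}}, D = {s_{k-1}}`
    -- (with vertices of `P_k` indexed `0,…,k-1`, so `s_i` is index `i-1`) works:
    ∀ (A B C D : Set (Fin k)),
      A = {i : Fin k | i.val ≤ k - 5 ∨ i.val = k - 1} →
      B = {i : Fin k | i.val = k - 4} →
      C = {i : Fin k | i.val = k - 3} →
      D = {i : Fin k | i.val = k - 2} →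
      IsCoalitionPartition (SimpleGraph.pathGraph k) {A, B, C, D} ∧
      Nonempty ((coalitionGraph (SimpleGraph.pathGraph k) {A, B, C, D}) ≃g
        completeBipartiteGraph (Fin 1) (Fin 3)) := by
  obtain ⟨e⟩ := coalitionGraph_pathGraph_star hk
  refine ⟨⟨_, isCoalitionPartition_pathGraph_star hk, ?_, ⟨e⟩⟩, ?_⟩
  · simpa only [Fintype.card_coe, Fintype.card_sum, Fintype.card_fin]
      using Fintype.card_congr e.toEquiv
  · rintro A B C D rfl rfl rfl rfl
    rw [← image_pathStarLeaf (by omega)]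
    exact ⟨isCoalitionPartition_pathGraph_star hk, ⟨e⟩⟩
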